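/- arXiv:1704.04436 — 3 statements merged into one kernel-verified Lean document; each statement's English description precedes it below -/
import Mathlib

section
/- Let σ > 1. Then the supremum over all natural numbers N of the sum ∑_{j=0}^{N} ((j! · (N−j)!)/N!)^{σ−1} is finite. -/
/-!
Each summand is `C(N, j)⁻¹ ^ s` with `s = σ - 1 > 0`, hence at most `1`. Fix `k` with
`k * s ≥ 2`. For the middle indices `k ≤ j ≤ N - k` unimodality gives
`C(N, j) ≥ C(N, k) ≥ N ^ k / (2 ^ k * k!)`, so those summands are `O(N ^ (-k * s)) = O(N ^ (-2))`
and together contribute `O(1)`; the remaining `2 * k` summands contribute at most `2 * k`.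
-/

open Finset Nat Real

namespace Nat

theorem choose_le_choose_of_le_of_le_half {n k j : ℕ} (hkj : k ≤ j) (hj : j ≤ n / 2) :
    n.choose k ≤ n.choose j := by
  induction j, hkj using Nat.le_induction with
  | base => rfl
  | succ j _ ih => exact (ih (by omega)).trans (choose_le_succ_of_lt_half_left (by omega))

theorem choose_le_choose_of_le_of_add_le {n k j : ℕ} (hkj : k ≤ j) (hjk : j + k ≤ n) :
    n.choose k ≤ n.choose j := by
  rcases le_or_gt j (n / 2) with h | h
  · exact choose_le_choose_of_le_of_le_half hkj h
  · rw [← choose_symm (show j ≤ n by omega)]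
    exact choose_le_choose_of_le_of_le_half (by omega) (by omega)

theorem pow_le_two_pow_mul_factorial_mul_choose {n k : ℕ} (h : 2 * k ≤ n) :
    n ^ k ≤ 2 ^ k * (k ! * n.choose k) :=
  calc n ^ k ≤ (2 * (n + 1 - k)) ^ k := Nat.pow_le_pow_left (by omega) k
    _ = 2 ^ k * (n + 1 - k) ^ k := Nat.mul_pow ..
    _ ≤ 2 ^ k * (k ! * n.choose k) := by
      rw [← descFactorial_eq_factorial_mul_choose]
      exact Nat.mul_le_mul_left _ (pow_sub_le_descFactorial n k)

end Nat

theorem factorial_mul_factorial_div_factorial_eq_inv_choose {K : Type*} [DivisionRing K]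
    [CharZero K] {n j : ℕ} (h : j ≤ n) :
    (j ! * (n - j)! : K) / n ! = (n.choose j : K)⁻¹ := by
  rw [Nat.cast_choose K h, inv_div]

theorem inv_choose_rpow_le_one (n j : ℕ) {s : ℝ} (hs : 0 ≤ s) (hj : j ≤ n) :
    (n.choose j : ℝ)⁻¹ ^ s ≤ 1 :=
  rpow_le_one (by positivity)
    (inv_le_one_of_one_le₀ (mod_cast Nat.one_le_iff_ne_zero.mpr (choose_pos hj).ne')) hs

theorem inv_choose_le {n k j : ℕ} (hkj : k ≤ j) (hjk : j + k ≤ n) (hn : 0 < n) :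
    (n.choose j : ℝ)⁻¹ ≤ ((2 ^ k * k ! : ℕ) : ℝ) / n ^ k := by
  have hchoose : 0 < n.choose j := choose_pos (by omega)
  rw [le_div_iff₀ (by positivity), inv_mul_le_iff₀ (by exact_mod_cast hchoose)]
  calc (n : ℝ) ^ k ≤ (2 ^ k * (k ! * n.choose k) : ℕ) := by
        exact_mod_cast pow_le_two_pow_mul_factorial_mul_choose (by omega)
    _ ≤ (2 ^ k * (k ! * n.choose j) : ℕ) := by
        gcongr; exact choose_le_choose_of_le_of_add_le hkj hjk
    _ = n.choose j * ((2 ^ k * k ! : ℕ) : ℝ) := by push_cast; ring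

theorem inv_choose_rpow_le {n k j : ℕ} {s : ℝ} (hs : 0 ≤ s) (hks : 2 ≤ k * s) (hkj : k ≤ j)
    (hjk : j + k ≤ n) : (n.choose j : ℝ)⁻¹ ^ s ≤ ((2 ^ k * k ! : ℕ) : ℝ) ^ s / n ^ 2 := by
  have hk : 0 < k := Nat.pos_of_ne_zero fun h => by simp [h] at hks; linarith
  have hn : (1 : ℝ) ≤ n := by exact_mod_cast (show 1 ≤ n by omega)
  calc (n.choose j : ℝ)⁻¹ ^ s ≤ (((2 ^ k * k ! : ℕ) : ℝ) / n ^ k) ^ s :=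
        rpow_le_rpow (by positivity) (inv_choose_le hkj hjk (by omega)) hs
    _ = ((2 ^ k * k ! : ℕ) : ℝ) ^ s / n ^ (k * s) := by
        rw [div_rpow (by positivity) (by positivity), ← rpow_natCast (n : ℝ) k, ← rpow_mul (by positivity)]
    _ ≤ ((2 ^ k * k ! : ℕ) : ℝ) ^ s / n ^ 2 := by
        gcongr
        exact_mod_cast rpow_le_rpow_of_exponent_le hn hks

theorem card_filter_range_not_middle_le (n k : ℕ) :
    #{j ∈ range (n + 1) | ¬(k ≤ j ∧ j + k ≤ n)} ≤ 2 * k := by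
  calc #{j ∈ range (n + 1) | ¬(k ≤ j ∧ j + k ≤ n)}
      ≤ #(range k ∪ Ico (n + 1 - k) (n + 1)) := by
        gcongr
        intro j
        simp only [mem_filter, mem_range, mem_union, mem_Ico]
        omega
    _ ≤ 2 * k := by
        grw [card_union_le, card_range, Nat.card_Ico]
        omega

theorem sum_inv_choose_rpow_le {k : ℕ} {s : ℝ} (hs : 0 ≤ s) (hks : 2 ≤ k * s) (n : ℕ) :
    ∑ j ∈ range (n + 1), (n.choose j : ℝ)⁻¹ ^ s ≤ 2 * k + 2 * ((2 ^ k * k ! : ℕ) : ℝ) ^ s := by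
  set B := ((2 ^ k * k ! : ℕ) : ℝ) ^ s
  rw [← sum_filter_add_sum_filter_not _ fun j => k ≤ j ∧ j + k ≤ n]
  have hmiddle : ∑ j ∈ range (n + 1) with k ≤ j ∧ j + k ≤ n, (n.choose j : ℝ)⁻¹ ^ s ≤ 2 * B :=
    calc _ ≤ #{j ∈ range (n + 1) | k ≤ j ∧ j + k ≤ n} • (B / n ^ 2) := by
          refine sum_le_card_nsmul _ _ _ fun j hj => ?_
          exact inv_choose_rpow_le hs hks (mem_filter.mp hj).2.1 (mem_filter.mp hj).2.2
      _ ≤ (n + 1) * (B / n ^ 2) := by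
          rw [nsmul_eq_mul]
          gcongr
          exact_mod_cast (card_filter_le _ _).trans (card_range _).le
      _ ≤ 2 * B := by
          rcases Nat.eq_zero_or_pos n with rfl | hn
          · rw [Nat.cast_zero, zero_pow two_ne_zero, div_zero, mul_zero]; positivity
          · have hn1 : (1 : ℝ) ≤ n := by exact_mod_cast hn
            rw [mul_div_assoc', div_le_iff₀ (by positivity)]
            have hB : (0 : ℝ) ≤ B := by positivity
            nlinarith [mul_le_mul_of_nonneg_left (show (n : ℝ) + 1 ≤ 2 * n ^ 2 by nlinarith) hB]
  have hrest : ∑ j ∈ range (n + 1) with ¬(k ≤ j ∧ j + k ≤ n), (n.choose j : ℝ)⁻¹ ^ s ≤ 2 * k :=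
    calc _ ≤ #{j ∈ range (n + 1) | ¬(k ≤ j ∧ j + k ≤ n)} • (1 : ℝ) := by
          refine sum_le_card_nsmul _ _ _ fun j hj => ?_
          exact inv_choose_rpow_le_one n j hs (mem_range_succ_iff.mp (mem_filter.mp hj).1)
      _ ≤ 2 * k := by
          rw [nsmul_one]
          exact_mod_cast card_filter_range_not_middle_le n k
  linarith

theorem binom_reciprocal_power_sum_bounded (σ : ℝ) (hσ : 1 < σ) :
    ∃ M : ℝ, ∀ N : ℕ,
      ∑ j ∈ Finset.range (N + 1),
        ((Nat.factorial j * Nat.factorial (N - j) : ℝ) / (Nat.factorial N : ℝ)) ^ (σ - 1) ≤ M := by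
  have hs : 0 ≤ σ - 1 := by linarith
  obtain ⟨k, hk⟩ := exists_nat_ge (2 / (σ - 1))
  have hks : 2 ≤ k * (σ - 1) := (div_le_iff₀ (by linarith)).mp hk
  refine ⟨2 * k + 2 * ((2 ^ k * k ! : ℕ) : ℝ) ^ (σ - 1), fun N => ?_⟩
  calc _ = ∑ j ∈ range (N + 1), (N.choose j : ℝ)⁻¹ ^ (σ - 1) := by
        refine sum_congr rfl fun j hj => ?_
        rw [factorial_mul_factorial_div_factorial_eq_inv_choose (mem_range_succ_iff.mp hj)]
    _ ≤ _ := sum_inv_choose_rpow_le hs hks N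
end

section
/- Let n ≥ 2 and 0 < s < n−1. Then for all u ∈ H¹(ℝⁿ), ∫_{ℝⁿ} ⟨x⟩^{−2−s}|u(x)|² dx ≤ (1/(2√((n−1)(n−1−s)))) · (‖∇u‖² + ∫_{ℝⁿ} ⟨x⟩^{−2s}|u(x)|² dx), where ⟨x⟩ = (1+|x|²)^{1/2}. -/
/-!
Along a ray `r ↦ r • ω` put `f r = ‖u (r • ω)‖²` and `G r = r ^ (n - 1) * ⟨r⟩ ^ (-s)`. Then
`G' r = r ^ (n - 2) * ⟨r⟩ ^ (-2 - s) * ((n - 1) + (n - 1 - s) * r ^ 2)`, which by AM-GM is at least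
`c * r ^ (n - 1) * ⟨r⟩ ^ (-2 - s)` with `c = 2 * √((n - 1) * (n - 1 - s))`. Integrating `G' * f` by
parts over `(0, ∞)` bounds it by `∫ G * |f'|`: the boundary terms vanish, at `0` because `G 0 = 0`
and at `∞` because `G * f` and its derivative are integrable. Integrating over
the sphere in polar coordinates gives the L¹ inequality
`c * ∫ ⟨x⟩ ^ (-2 - s) * ‖u‖² ≤ ∫ ⟨x⟩ ^ (-s) * ‖∇‖u‖²‖`, and
`⟨x⟩ ^ (-s) * ‖∇‖u‖²‖ ≤ 2 * ⟨x⟩ ^ (-s) * ‖u‖ * ‖∇u‖ ≤ ‖∇u‖² + ⟨x⟩ ^ (-2 * s) * ‖u‖²`.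
-/

open MeasureTheory Measure Metric Set Filter Topology Module

section PolarCoordinates

variable {E : Type*} [NormedAddCommGroup E] [NormedSpace ℝ E] [FiniteDimensional ℝ E]
  [Nontrivial E] [MeasurableSpace E] [BorelSpace E] (μ : Measure E) [μ.IsAddHaarMeasure]

theorem integral_volumeIoiPow (m : ℕ) (h : ℝ → ℝ) :
    ∫ r, h r ∂volumeIoiPow m = ∫ r in Ioi (0 : ℝ), r ^ m * h r := by
  simp only [volumeIoiPow, ENNReal.ofReal]
  rw [integral_withDensity_eq_integral_smul (measurable_subtype_coe.pow_const _).real_toNNReal,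
    integral_subtype_comap measurableSet_Ioi fun r ↦ Real.toNNReal (r ^ m) • h r]
  refine setIntegral_congr_fun measurableSet_Ioi fun r hr ↦ ?_
  rw [NNReal.smul_def, Real.coe_toNNReal _ (pow_nonneg hr.out.le _), smul_eq_mul]

theorem integrable_volumeIoiPow_iff (m : ℕ) (h : ℝ → ℝ) :
    Integrable (fun r : Ioi (0 : ℝ) ↦ h r) (volumeIoiPow m) ↔
      IntegrableOn (fun r ↦ r ^ m * h r) (Ioi 0) := by
  rw [volumeIoiPow, integrable_withDensity_iff (measurable_subtype_coe.pow_const _).ennreal_ofReal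
    (.of_forall fun _ ↦ ENNReal.ofReal_lt_top), integrableOn_iff_comap_subtypeVal measurableSet_Ioi]
  refine integrable_congr (.of_forall fun r ↦ ?_)
  simp [ENNReal.toReal_ofReal (pow_nonneg r.2.out.le m), mul_comm]

omit [Nontrivial E] in
theorem measurableEmbedding_smul_sphere_Ioi :
    MeasurableEmbedding fun p : sphere (0 : E) 1 × Ioi (0 : ℝ) ↦ (p.2 : ℝ) • (p.1 : E) :=
  (MeasurableEmbedding.subtype_coe (measurableSet_singleton (0 : E)).compl).comp
    (homeomorphUnitSphereProd E).symm.measurableEmbedding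

theorem measurePreserving_smul_sphere_Ioi :
    MeasurePreserving (fun p : sphere (0 : E) 1 × Ioi (0 : ℝ) ↦ (p.2 : ℝ) • (p.1 : E))
      (μ.toSphere.prod (volumeIoiPow (finrank ℝ E - 1))) μ := by
  have hval : MeasurePreserving ((↑) : ({0}ᶜ : Set E) → E) (μ.comap (↑)) μ :=
    ⟨measurable_subtype_coe, by
      rw [map_comap_subtype_coe (measurableSet_singleton 0).compl, restrict_compl_singleton]⟩
  exact hval.comp (μ.measurePreserving_homeomorphUnitSphereProd.symm
    (homeomorphUnitSphereProd E).toMeasurableEquiv)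

theorem MeasureTheory.Integrable.comp_smul_sphere_Ioi {F : E → ℝ} (hF : Integrable F μ) :
    Integrable (fun p : sphere (0 : E) 1 × Ioi (0 : ℝ) ↦ F ((p.2 : ℝ) • (p.1 : E)))
      (μ.toSphere.prod (volumeIoiPow (finrank ℝ E - 1))) :=
  ((measurePreserving_smul_sphere_Ioi μ).integrable_comp_emb
    measurableEmbedding_smul_sphere_Ioi).2 hF

theorem integral_eq_integral_sphere_Ioi {F : E → ℝ} (hF : Integrable F μ) :
    ∫ x, F x ∂μ = ∫ ω : sphere (0 : E) 1,
      (∫ r in Ioi (0 : ℝ), r ^ (finrank ℝ E - 1) * F (r • (ω : E))) ∂μ.toSphere := by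
  rw [← (measurePreserving_smul_sphere_Ioi μ).integral_comp measurableEmbedding_smul_sphere_Ioi,
    integral_prod _ (hF.comp_smul_sphere_Ioi μ)]
  exact integral_congr_ae (.of_forall fun ω ↦ integral_volumeIoiPow _ fun r ↦ F (r • (ω : E)))

theorem integrable_integral_Ioi_of_integrable {F : E → ℝ} (hF : Integrable F μ) :
    Integrable (fun ω : sphere (0 : E) 1 ↦
      ∫ r in Ioi (0 : ℝ), r ^ (finrank ℝ E - 1) * F (r • (ω : E))) μ.toSphere :=
  (hF.comp_smul_sphere_Ioi μ).integral_prod_left.congr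
    (.of_forall fun ω ↦ integral_volumeIoiPow _ fun r ↦ F (r • (ω : E)))

theorem ae_integrableOn_Ioi_of_integrable {F : E → ℝ} (hF : Integrable F μ) :
    ∀ᵐ ω : sphere (0 : E) 1 ∂μ.toSphere,
      IntegrableOn (fun r ↦ r ^ (finrank ℝ E - 1) * F (r • (ω : E))) (Ioi 0) := by
  filter_upwards [(hF.comp_smul_sphere_Ioi μ).prod_right_ae] with ω hω
  exact (integrable_volumeIoiPow_iff _ _).1 hω

theorem integral_le_integral_of_ae_integral_Ioi_le {F P : E → ℝ} (hF : Integrable F μ)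
    (hP : Integrable P μ)
    (h : ∀ᵐ ω : sphere (0 : E) 1 ∂μ.toSphere,
      ∫ r in Ioi (0 : ℝ), r ^ (finrank ℝ E - 1) * F (r • (ω : E)) ≤
        ∫ r in Ioi (0 : ℝ), r ^ (finrank ℝ E - 1) * P (r • (ω : E))) :
    ∫ x, F x ∂μ ≤ ∫ x, P x ∂μ := by
  rw [integral_eq_integral_sphere_Ioi μ hF, integral_eq_integral_sphere_Ioi μ hP]
  exact integral_mono_ae (integrable_integral_Ioi_of_integrable μ hF)
    (integrable_integral_Ioi_of_integrable μ hP) h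

end PolarCoordinates

theorem integral_Ioi_deriv_mul_eq_neg {u v u' v' : ℝ → ℝ} {a : ℝ}
    (hu : ∀ x ∈ Ioi a, HasDerivAt u (u' x) x) (hv : ∀ x ∈ Ioi a, HasDerivAt v (v' x) x)
    (hcont : ContinuousWithinAt (u * v) (Ioi a) a) (ha : u a * v a = 0)
    (huv : IntegrableOn (u * v) (Ioi a)) (hu'v : IntegrableOn (u' * v) (Ioi a))
    (huv' : IntegrableOn (u * v') (Ioi a)) :
    ∫ x in Ioi a, u' x * v x = -∫ x in Ioi a, u x * v' x := by
  have h_zero : Tendsto (u * v) (𝓝[>] a) (𝓝 0) := by simpa [ha] using hcont.tendsto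
  have h_infty : Tendsto (u * v) atTop (𝓝 0) :=
    tendsto_zero_of_hasDerivAt_of_integrableOn_Ioi (fun x hx ↦ (hu x hx).mul (hv x hx))
      (hu'v.add huv') huv
  linarith [integral_Ioi_mul_deriv_eq_deriv_mul hu hv huv' hu'v h_zero h_infty]

theorem two_mul_sqrt_mul_mul_le {a b : ℝ} (ha : 0 ≤ a) (hb : 0 ≤ b) (r : ℝ) :
    2 * √(a * b) * r ≤ a + b * r ^ 2 := by
  rw [Real.sqrt_mul ha]
  nlinarith [sq_nonneg (√a - √b * r), Real.sq_sqrt ha, Real.sq_sqrt hb]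

theorem MeasureTheory.IntegrableOn.pow_pred_mul {m : ℕ} {f : ℝ → ℝ}
    (hf : ContinuousOn f (Ici 0))
    (hfi : IntegrableOn (fun r ↦ r ^ m * f r) (Ioi 0)) :
    IntegrableOn (fun r ↦ r ^ (m - 1) * f r) (Ioi 0) := by
  have hcont : ContinuousOn (fun r ↦ r ^ (m - 1) * f r) (Ici 0) :=
    (continuousOn_pow _).mul hf
  rw [← Ioc_union_Ioi_eq_Ioi zero_le_one]
  refine .union ((hcont.mono Icc_subset_Ici_self).integrableOn_Icc.mono_set Ioc_subset_Icc_self)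
    (Integrable.mono (hfi.mono_set (Ioi_subset_Ioi zero_le_one))
      ((hcont.mono (Ioi_subset_Ici zero_le_one)).aestronglyMeasurable measurableSet_Ioi) ?_)
  filter_upwards [ae_restrict_mem measurableSet_Ioi] with r (hr : 1 < r)
  rw [norm_mul, norm_mul, norm_pow, norm_pow]
  gcongr
  exacts [by simpa [abs_of_pos (zero_lt_one.trans hr)] using hr.le, Nat.sub_le m 1]

theorem MeasureTheory.IntegrableOn.pow_mul_one_add_sq_rpow_mul {m : ℕ} {q : ℝ} (hq : q ≤ 0)
    {f : ℝ → ℝ} (hfi : IntegrableOn (fun r ↦ r ^ m * f r) (Ioi 0)) :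
    IntegrableOn (fun r ↦ r ^ m * ((1 + r ^ 2) ^ q * f r)) (Ioi 0) := by
  refine (hfi.bdd_mul (f := fun r ↦ (1 + r ^ 2) ^ q) (c := 1)
    (by fun_prop : Measurable fun r : ℝ ↦ (1 + r ^ 2) ^ q).aestronglyMeasurable
    (.of_forall fun r ↦ ?_)).congr (.of_forall fun r ↦ mul_left_comm _ _ _)
  rw [Real.norm_of_nonneg (by positivity)]
  exact Real.rpow_le_one_of_one_le_of_nonpos (by nlinarith) hq

theorem hasDerivAt_pow_mul_one_add_sq_rpow {m : ℕ} (hm : 1 ≤ m) (s r : ℝ) :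
    HasDerivAt (fun r : ℝ ↦ r ^ m * (1 + r ^ 2) ^ (-s / 2))
      (r ^ (m - 1) * (1 + r ^ 2) ^ ((-2 - s) / 2) * (m + (m - s) * r ^ 2)) r := by
  have hpos : 0 < 1 + r ^ 2 := by positivity
  have hrpow : HasDerivAt (fun r : ℝ ↦ (1 + r ^ 2) ^ (-s / 2))
      (-s / 2 * (1 + r ^ 2) ^ ((-2 - s) / 2) * (2 * r)) r := by
    convert ((hasDerivAt_pow 2 r).const_add 1).rpow_const (p := -s / 2) (.inl hpos.ne') using 1
    rw [show (-2 - s) / 2 = -s / 2 - 1 by ring]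
    norm_num
    ring
  have hsplit : (1 + r ^ 2) ^ (-s / 2) = (1 + r ^ 2) ^ ((-2 - s) / 2) * (1 + r ^ 2) := by
    rw [← Real.rpow_add_one hpos.ne']; ring_nf
  refine ((hasDerivAt_pow m r).mul hrpow).congr_deriv ?_
  obtain ⟨k, rfl⟩ := Nat.exists_eq_add_of_le' hm
  rw [hsplit]
  push_cast
  simp only [pow_succ]
  ring

theorem mul_pow_mul_one_add_sq_rpow_le {m : ℕ} (hm : 1 ≤ m) {s r : ℝ} (hsm : s ≤ m)
    (hr : 0 ≤ r) :
    2 * √(m * (m - s)) * (r ^ m * (1 + r ^ 2) ^ ((-2 - s) / 2)) ≤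
      r ^ (m - 1) * (1 + r ^ 2) ^ ((-2 - s) / 2) * (m + (m - s) * r ^ 2) := by
  have hrm : r ^ m = r ^ (m - 1) * r := by rw [← pow_succ, Nat.sub_add_cancel hm]
  calc 2 * √(m * (m - s)) * (r ^ m * (1 + r ^ 2) ^ ((-2 - s) / 2))
      = r ^ (m - 1) * (1 + r ^ 2) ^ ((-2 - s) / 2) * (2 * √(m * (m - s)) * r) := by
        rw [hrm]; ring
    _ ≤ r ^ (m - 1) * (1 + r ^ 2) ^ ((-2 - s) / 2) * (m + (m - s) * r ^ 2) := by
        gcongr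
        exact two_mul_sqrt_mul_mul_le (Nat.cast_nonneg m) (by linarith) r

theorem pow_pred_mul_one_add_sq_rpow_mul_le {m : ℕ} {s r : ℝ} (hs : 0 ≤ s) (hr : 0 ≤ r) :
    r ^ (m - 1) * (1 + r ^ 2) ^ ((-2 - s) / 2) * (m + (m - s) * r ^ 2) ≤ m * r ^ (m - 1) := by
  have hpos : 0 < 1 + r ^ 2 := by positivity
  have hq : (1 + r ^ 2) ^ ((-2 - s) / 2) * (1 + r ^ 2) ≤ 1 := by
    rw [← Real.rpow_add_one hpos.ne']
    exact Real.rpow_le_one_of_one_le_of_nonpos (by nlinarith) (by linarith)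
  calc r ^ (m - 1) * (1 + r ^ 2) ^ ((-2 - s) / 2) * (m + (m - s) * r ^ 2)
      ≤ r ^ (m - 1) * (1 + r ^ 2) ^ ((-2 - s) / 2) * (m * (1 + r ^ 2)) := by
        gcongr; nlinarith
    _ = m * r ^ (m - 1) * ((1 + r ^ 2) ^ ((-2 - s) / 2) * (1 + r ^ 2)) := by ring
    _ ≤ m * r ^ (m - 1) := mul_le_of_le_one_right (by positivity) hq

theorem MeasureTheory.IntegrableOn.deriv_pow_mul_one_add_sq_rpow_mul {m : ℕ} {s : ℝ}
    (hs : 0 ≤ s) (hsm : s ≤ m) {f : ℝ → ℝ} (hfi : IntegrableOn (fun r ↦ r ^ m * f r) (Ioi 0))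
    (hf : ContinuousOn f (Ici 0)) (hf0 : ∀ r ∈ Ioi (0 : ℝ), 0 ≤ f r) :
    IntegrableOn (fun r ↦ r ^ (m - 1) * (1 + r ^ 2) ^ ((-2 - s) / 2) * (m + (m - s) * r ^ 2) * f r)
      (Ioi 0) := by
  refine ((hfi.pow_pred_mul hf).const_mul m).mono' ((by fun_prop : Measurable fun r : ℝ ↦
    r ^ (m - 1) * (1 + r ^ 2) ^ ((-2 - s) / 2) * (m + (m - s) * r ^ 2)).aestronglyMeasurable.mul
    ((hf.mono Ioi_subset_Ici_self).aestronglyMeasurable measurableSet_Ioi)) ?_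
  filter_upwards [ae_restrict_mem measurableSet_Ioi] with r (hr : 0 < r)
  have hms : (0 : ℝ) ≤ m - s := by linarith
  rw [norm_mul, Real.norm_of_nonneg (by positivity), Real.norm_of_nonneg (hf0 r hr), ← mul_assoc]
  exact mul_le_mul_of_nonneg_right (pow_pred_mul_one_add_sq_rpow_mul_le hs hr.le) (hf0 r hr)

theorem two_mul_sqrt_mul_integral_Ioi_le {m : ℕ} (hm : 1 ≤ m) {s : ℝ} (hs : 0 ≤ s)
    (hsm : s ≤ m) {f d p : ℝ → ℝ} (hf : ContinuousOn f (Ici 0))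
    (hf0 : ∀ r ∈ Ioi (0 : ℝ), 0 ≤ f r)
    (hd : ∀ r ∈ Ioi (0 : ℝ), HasDerivAt f (d r) r) (hdp : ∀ r ∈ Ioi (0 : ℝ), |d r| ≤ p r)
    (hfi : IntegrableOn (fun r ↦ r ^ m * f r) (Ioi 0))
    (hpi : IntegrableOn (fun r ↦ r ^ m * ((1 + r ^ 2) ^ (-s / 2) * p r)) (Ioi 0)) :
    2 * √(m * (m - s)) * ∫ r in Ioi 0, r ^ m * ((1 + r ^ 2) ^ ((-2 - s) / 2) * f r) ≤
      ∫ r in Ioi 0, r ^ m * ((1 + r ^ 2) ^ (-s / 2) * p r) := by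
  set G : ℝ → ℝ := fun r ↦ r ^ m * (1 + r ^ 2) ^ (-s / 2)
  set G' : ℝ → ℝ := fun r ↦ r ^ (m - 1) * (1 + r ^ 2) ^ ((-2 - s) / 2) * (m + (m - s) * r ^ 2)
  have hG : ∀ r, HasDerivAt G (G' r) r := hasDerivAt_pow_mul_one_add_sq_rpow hm s
  have hG0 : ∀ r ∈ Ioi (0 : ℝ), 0 ≤ G r := fun r (hr : 0 < r) ↦ by positivity
  have hd_meas : AEStronglyMeasurable d (volume.restrict (Ioi 0)) :=
    (measurable_deriv f).aestronglyMeasurable.congr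
      ((ae_restrict_mem measurableSet_Ioi).mono fun r hr ↦ (hd r hr).deriv)
  have hGf : IntegrableOn (G * f) (Ioi 0) :=
    (hfi.pow_mul_one_add_sq_rpow_mul (by linarith)).congr
      (.of_forall fun r ↦ (mul_assoc _ _ _).symm)
  have hGd : IntegrableOn (G * d) (Ioi 0) := by
    refine hpi.mono' ((continuous_iff_continuousAt.2 fun r ↦ (hG r).continuousAt)
      |>.aestronglyMeasurable.mul hd_meas) ?_
    filter_upwards [ae_restrict_mem measurableSet_Ioi] with r hr
    rw [Pi.mul_apply, norm_mul, Real.norm_of_nonneg (hG0 r hr), ← mul_assoc]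
    exact mul_le_mul_of_nonneg_left ((Real.norm_eq_abs _).trans_le (hdp r hr)) (hG0 r hr)
  have hG'f : IntegrableOn (G' * f) (Ioi 0) := hfi.deriv_pow_mul_one_add_sq_rpow_mul hs hsm hf hf0
  have hGf0 : ContinuousWithinAt (G * f) (Ioi 0) 0 :=
    (hG 0).continuousAt.continuousWithinAt.mul ((hf 0 self_mem_Ici).mono Ioi_subset_Ici_self)
  have hibp := integral_Ioi_deriv_mul_eq_neg (fun r _ ↦ hG r) hd hGf0
    (by simp [G, zero_pow (by omega : m ≠ 0)]) hGf hG'f hGd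
  calc 2 * √(m * (m - s)) * ∫ r in Ioi 0, r ^ m * ((1 + r ^ 2) ^ ((-2 - s) / 2) * f r)
      = ∫ r in Ioi 0, 2 * √(m * (m - s)) * (r ^ m * ((1 + r ^ 2) ^ ((-2 - s) / 2) * f r)) :=
        (integral_const_mul _ _).symm
    _ ≤ ∫ r in Ioi 0, G' r * f r := by
        refine setIntegral_mono_on ((hfi.pow_mul_one_add_sq_rpow_mul (by linarith)).const_mul _)
          hG'f measurableSet_Ioi fun r (hr : 0 < r) ↦ ?_
        convert mul_le_mul_of_nonneg_right (mul_pow_mul_one_add_sq_rpow_le hm hsm hr.le)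
          (hf0 r hr) using 1
        ring
    _ = -∫ r in Ioi 0, G r * d r := hibp
    _ ≤ ∫ r in Ioi 0, r ^ m * ((1 + r ^ 2) ^ (-s / 2) * p r) := by
        rw [← integral_neg]
        refine setIntegral_mono_on hGd.neg hpi measurableSet_Ioi fun r hr ↦ ?_
        calc -(G r * d r) ≤ G r * |d r| := by
              simpa [abs_mul, abs_of_nonneg (hG0 r hr)] using neg_le_abs (G r * d r)
          _ ≤ G r * p r := mul_le_mul_of_nonneg_left (hdp r hr) (hG0 r hr)
          _ = r ^ m * ((1 + r ^ 2) ^ (-s / 2) * p r) := mul_assoc _ _ _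

theorem norm_fderiv_norm_sq_le {E F : Type*} [NormedAddCommGroup E] [NormedSpace ℝ E]
    [NormedAddCommGroup F] [InnerProductSpace ℝ F]
    {u : E → F} {x : E} (hu : DifferentiableAt ℝ u x) :
    ‖fderiv ℝ (fun y ↦ ‖u y‖ ^ 2) x‖ ≤ 2 * ‖u x‖ * ‖fderiv ℝ u x‖ := by
  rw [hu.hasFDerivAt.norm_sq.fderiv, ← innerSL_apply_norm ℝ (u x), mul_assoc]
  exact norm_nsmul_le.trans (by push_cast; gcongr; exact (innerSL ℝ (u x)).opNorm_comp_le _)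

section Hardy

variable {E : Type*} [NormedAddCommGroup E] [MeasurableSpace E] [BorelSpace E] {μ : Measure E}

theorem MeasureTheory.Integrable.one_add_norm_sq_rpow_mul {q : ℝ} (hq : q ≤ 0) {f : E → ℝ}
    (hf : Integrable f μ) : Integrable (fun x ↦ (1 + ‖x‖ ^ 2) ^ q * f x) μ := by
  refine hf.bdd_mul (c := 1)
    (by fun_prop : Measurable fun x : E ↦ (1 + ‖x‖ ^ 2) ^ q).aestronglyMeasurable
    (.of_forall fun x ↦ ?_)
  rw [Real.norm_of_nonneg (by positivity)]
  exact Real.rpow_le_one_of_one_le_of_nonpos (by nlinarith [sq_nonneg ‖x‖]) hq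

variable [NormedSpace ℝ E] [FiniteDimensional ℝ E] (μ) [μ.IsAddHaarMeasure]

theorem two_mul_sqrt_mul_integral_le_integral_norm_fderiv (hE : 2 ≤ finrank ℝ E) {s : ℝ}
    (hs : 0 ≤ s) (hsE : s ≤ finrank ℝ E - 1) {g : E → ℝ} (hg : Differentiable ℝ g)
    (hg0 : ∀ x, 0 ≤ g x) (hgi : Integrable g μ)
    (hDg : Integrable (fun x ↦ (1 + ‖x‖ ^ 2) ^ (-s / 2) * ‖fderiv ℝ g x‖) μ) :
    2 * √((finrank ℝ E - 1) * (finrank ℝ E - 1 - s)) *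
        ∫ x, (1 + ‖x‖ ^ 2) ^ ((-2 - s) / 2) * g x ∂μ ≤
      ∫ x, (1 + ‖x‖ ^ 2) ^ (-s / 2) * ‖fderiv ℝ g x‖ ∂μ := by
  have : Nontrivial E := Module.nontrivial_of_finrank_pos (R := ℝ) (by omega)
  have hm : ((finrank ℝ E - 1 : ℕ) : ℝ) = finrank ℝ E - 1 := by rw [Nat.cast_pred (by omega)]
  rw [← hm, ← integral_const_mul]
  refine integral_le_integral_of_ae_integral_Ioi_le μ
    ((hgi.one_add_norm_sq_rpow_mul (by linarith)).const_mul _) hDg ?_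
  filter_upwards [ae_integrableOn_Ioi_of_integrable μ hgi,
    ae_integrableOn_Ioi_of_integrable μ hDg] with ω hgω hDgω
  have hω : ‖(ω : E)‖ = 1 := norm_eq_of_mem_sphere ω
  have hrω : ∀ r : ℝ, ‖r • (ω : E)‖ ^ 2 = r ^ 2 := fun r ↦ by simp [norm_smul, hω]
  simp only [hrω] at hDgω ⊢
  simp only [mul_left_comm _ (2 * √_), integral_const_mul]
  refine two_mul_sqrt_mul_integral_Ioi_le (by omega) hs (by rwa [hm])
    (hg.continuous.comp (continuous_id.smul continuous_const)).continuousOn (fun r _ ↦ hg0 _)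
    (fun r _ ↦ (hg _).hasFDerivAt.comp_hasDerivAt r
      (by simpa using (hasDerivAt_id r).smul_const (ω : E)))
    (fun r _ ↦ by simpa [hω] using (fderiv ℝ g (r • (ω : E))).le_opNorm ω) hgω hDgω

theorem integral_one_add_norm_sq_rpow_mul_norm_sq_le {F : Type*} [NormedAddCommGroup F]
    [InnerProductSpace ℝ F] (hE : 2 ≤ finrank ℝ E) {s : ℝ} (hs : 0 ≤ s)
    (hsE : s < finrank ℝ E - 1) {u : E → F} (hu : Differentiable ℝ u)
    (hu2 : Integrable (fun x ↦ ‖u x‖ ^ 2) μ) (hgrad : Integrable (fun x ↦ ‖fderiv ℝ u x‖ ^ 2) μ) :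
    ∫ x, (1 + ‖x‖ ^ 2) ^ ((-2 - s) / 2) * ‖u x‖ ^ 2 ∂μ ≤
      1 / (2 * √((finrank ℝ E - 1) * (finrank ℝ E - 1 - s))) *
        ((∫ x, ‖fderiv ℝ u x‖ ^ 2 ∂μ) + ∫ x, (1 + ‖x‖ ^ 2) ^ (-s) * ‖u x‖ ^ 2 ∂μ) := by
  have hpt : ∀ x, (1 + ‖x‖ ^ 2) ^ (-s / 2) * ‖fderiv ℝ (fun y ↦ ‖u y‖ ^ 2) x‖ ≤
      ‖fderiv ℝ u x‖ ^ 2 + (1 + ‖x‖ ^ 2) ^ (-s) * ‖u x‖ ^ 2 := by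
    intro x
    have hw : ((1 + ‖x‖ ^ 2) ^ (-s / 2)) ^ 2 = (1 + ‖x‖ ^ 2) ^ (-s) := by
      rw [← Real.rpow_natCast, ← Real.rpow_mul (by positivity)]; ring_nf
    calc _ ≤ (1 + ‖x‖ ^ 2) ^ (-s / 2) * (2 * ‖u x‖ * ‖fderiv ℝ u x‖) := by
          gcongr; exact norm_fderiv_norm_sq_le (hu x)
      _ ≤ _ := by
          rw [← hw]; nlinarith [sq_nonneg ((1 + ‖x‖ ^ 2) ^ (-s / 2) * ‖u x‖ - ‖fderiv ℝ u x‖)]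
  have hW := hu2.one_add_norm_sq_rpow_mul (q := -s) (by linarith)
  have hP : Integrable (fun x ↦ (1 + ‖x‖ ^ 2) ^ (-s / 2) * ‖fderiv ℝ (‖u ·‖ ^ 2) x‖) μ := by
    refine (hgrad.add hW).mono' ?_ (.of_forall fun x ↦ ?_)
    · exact ((by fun_prop : Measurable fun x : E ↦ (1 + ‖x‖ ^ 2) ^ (-s / 2)).mul
        (measurable_fderiv ℝ _).norm).aestronglyMeasurable
    · rw [Real.norm_of_nonneg (by positivity)]; exact hpt x
  have hc : 0 < 2 * √((finrank ℝ E - 1) * (finrank ℝ E - 1 - s)) := by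
    have : (0 : ℝ) < finrank ℝ E - 1 := by linarith
    have := Real.sqrt_pos.2 (mul_pos this (by linarith : (0 : ℝ) < finrank ℝ E - 1 - s))
    positivity
  rw [one_div_mul_eq_div, le_div_iff₀ hc, mul_comm, ← integral_add hgrad hW]
  exact (two_mul_sqrt_mul_integral_le_integral_norm_fderiv μ hE hs hsE.le (hu.norm_sq ℝ)
    (fun x ↦ by positivity) hu2 hP).trans (integral_mono hP (hgrad.add hW) hpt)

end Hardy

theorem weighted_hardy_type_inequality (n : ℕ) (hn : 2 ≤ n) (s : ℝ) (hs0 : 0 < s)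
    (hs1 : s < (n : ℝ) - 1)
    (u : EuclideanSpace ℝ (Fin n) → ℂ)
    (hu : Differentiable ℝ u)
    (hu2 : Integrable (fun x => ‖u x‖ ^ 2))
    (hgrad : Integrable (fun x => ‖fderiv ℝ u x‖ ^ 2)) :
    ∫ x : EuclideanSpace ℝ (Fin n), (1 + ‖x‖ ^ 2) ^ ((-2 - s) / 2) * ‖u x‖ ^ 2 ≤
      (1 / (2 * Real.sqrt (((n : ℝ) - 1) * ((n : ℝ) - 1 - s)))) *
        ((∫ x : EuclideanSpace ℝ (Fin n), ‖fderiv ℝ u x‖ ^ 2) +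
          ∫ x : EuclideanSpace ℝ (Fin n), (1 + ‖x‖ ^ 2) ^ (-s) * ‖u x‖ ^ 2) := by
  have hdim := finrank_euclideanSpace_fin (𝕜 := ℝ) (n := n)
  have := integral_one_add_norm_sq_rpow_mul_norm_sq_le volume (by rwa [hdim]) hs0.le
    (by rwa [hdim]) hu hu2 hgrad
  rwa [hdim] at this
end

section
/- Let 0 < μ < 1, M ≥ 1, a > 0 and for N ∈ ℕ set R_N = M⟨(2N−1)μ⟩^{1/(1−μ)} where ⟨t⟩ = (1+t²)^{1/2}. Then there exists A ≥ 1 (depending only on μ, a, M) such that sup_{x ∈ ℝⁿ} e^{−a⟨x⟩^{1−μ}} (1 + |x|²/R_N²)^{Nμ} ≤ ⟨A⟩^{2Nμ} for all N ≥ 1. -/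
/-!
Put `u = |x|² / R_N²`. Where `u ≤ A²` the exponential factor is at most `1`. Where `u` is large,
`log (1 + u) ≤ a u^{(1-μ)/2}` because the logarithm grows slower than any power, and `R_N` is
chosen so that `Nμ ≤ (2N-1)μ ≤ R_N^{1-μ}`; together `(1 + u)^{Nμ} ≤ exp (a |x|^{1-μ}) ≤ exp (a ⟨x⟩^{1-μ})`,
so the whole product is at most `1`.
-/

open Real Filter Asymptotics

lemma eventually_log_one_add_le_mul_rpow {s : ℝ} (hs : 0 < s) {a : ℝ} (ha : 0 < a) :
    ∀ᶠ u in atTop, log (1 + u) ≤ a * u ^ s := by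
  have hlog : (fun u => log (1 + u)) =o[atTop] fun u => (1 + u) ^ s :=
    (isLittleO_log_rpow_atTop hs).comp_tendsto (tendsto_atTop_add_const_left _ 1 tendsto_id)
  have hlin : (fun u : ℝ => 1 + u) =O[atTop] id :=
    (isLittleO_const_id_atTop (1 : ℝ)).isBigO.add (isBigO_refl _ _)
  filter_upwards [(hlog.trans_isBigO (hlin.rpow hs.le (eventually_ge_atTop 0))).bound ha,
    eventually_ge_atTop 0] with u hu hu0
  rw [norm_of_nonneg (rpow_nonneg hu0 s)] at hu
  exact (le_abs_self _).trans hu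

lemma le_sq_mul_one_add_sq_rpow_rpow {p M t : ℝ} (hp : 0 < p) (hM : 1 ≤ M) (ht : 0 ≤ t) :
    t ≤ ((M * (1 + t ^ 2) ^ (1 / (2 * p))) ^ 2) ^ (p / 2) := by
  have hpow : ((M * (1 + t ^ 2) ^ (1 / (2 * p))) ^ 2) ^ (p / 2) = M ^ p * √(1 + t ^ 2) := by
    rw [← rpow_natCast, ← rpow_mul (by positivity), mul_rpow (by positivity) (by positivity),
      ← rpow_mul (by positivity), sqrt_eq_rpow]
    congr 2 <;> (push_cast; field_simp)
  calc t = √(t ^ 2) := (sqrt_sq ht).symm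
    _ ≤ 1 * √(1 + t ^ 2) := by rw [one_mul]; exact sqrt_le_sqrt (by linarith)
    _ ≤ M ^ p * √(1 + t ^ 2) := by gcongr; exact one_le_rpow hM hp.le
    _ = _ := hpow.symm

lemma exp_neg_mul_rpow_mul_rpow_le_one {a s c R t : ℝ} (ha : 0 ≤ a) (hs : 0 ≤ s) (hc : 0 ≤ c)
    (hR : R ≠ 0) (ht : 0 ≤ t) (hcR : c ≤ (R ^ 2) ^ s)
    (hlog : log (1 + t / R ^ 2) ≤ a * (t / R ^ 2) ^ s) :
    exp (-a * (1 + t) ^ s) * (1 + t / R ^ 2) ^ c ≤ 1 := by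
  rw [neg_mul, exp_neg, inv_mul_le_iff₀ (exp_pos _), mul_one, rpow_def_of_pos (by positivity),
    exp_le_exp]
  calc log (1 + t / R ^ 2) * c ≤ a * (t / R ^ 2) ^ s * (R ^ 2) ^ s :=
        mul_le_mul hlog hcR hc (by positivity)
    _ = a * t ^ s := by
        rw [mul_assoc, ← mul_rpow (by positivity) (by positivity), div_mul_cancel₀ _ (by positivity)]
    _ ≤ a * (1 + t) ^ s := by gcongr; linarith

theorem exp_weight_dominates_polynomial_weight (n : ℕ) (μ a M : ℝ)
    (hμ0 : 0 < μ) (hμ1 : μ < 1) (ha : 0 < a) (hM : 1 ≤ M) :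
    ∃ A : ℝ, 1 ≤ A ∧ ∀ N : ℕ, 1 ≤ N → ∀ x : EuclideanSpace ℝ (Fin n),
      Real.exp (-a * (1 + ‖x‖ ^ 2) ^ ((1 - μ) / 2)) *
          (1 + ‖x‖ ^ 2 /
              (M * (1 + ((2 * (N : ℝ) - 1) * μ) ^ 2) ^ (1 / (2 * (1 - μ)))) ^ 2) ^ ((N : ℝ) * μ)
        ≤ (1 + A ^ 2) ^ ((N : ℝ) * μ) := by
  obtain ⟨K, hK⟩ := eventually_atTop.1
    (eventually_log_one_add_le_mul_rpow (s := (1 - μ) / 2) (by linarith) ha)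
  set A := max 1 K
  refine ⟨A, le_max_left _ _, fun N hN x => ?_⟩
  set R := M * (1 + ((2 * (N : ℝ) - 1) * μ) ^ 2) ^ (1 / (2 * (1 - μ)))
  have hR : 0 < R := mul_pos (by linarith) (rpow_pos_of_pos (by positivity) _)
  have hc : 0 ≤ (N : ℝ) * μ := by positivity
  have hcR : (N : ℝ) * μ ≤ (R ^ 2) ^ ((1 - μ) / 2) := by
    have hN' : (1 : ℝ) ≤ N := by exact_mod_cast hN
    exact (show (N : ℝ) * μ ≤ (2 * N - 1) * μ by nlinarith).trans
      (le_sq_mul_one_add_sq_rpow_rpow (by linarith) hM (by nlinarith))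
  rcases le_or_gt (‖x‖ ^ 2 / R ^ 2) (A ^ 2) with hsmall | hlarge
  · have hexp : exp (-a * (1 + ‖x‖ ^ 2) ^ ((1 - μ) / 2)) ≤ 1 :=
      exp_le_one_iff.2 (mul_nonpos_of_nonpos_of_nonneg (by linarith) (by positivity))
    simpa using mul_le_mul hexp (rpow_le_rpow (by positivity) (by linarith) hc)
      (by positivity) zero_le_one
  · have hKu : K ≤ ‖x‖ ^ 2 / R ^ 2 :=
      (le_max_right 1 K).trans ((le_self_pow₀ (le_max_left 1 K) two_ne_zero).trans hlarge.le)
    exact (exp_neg_mul_rpow_mul_rpow_le_one ha.le (by linarith) hc hR.ne' (by positivity)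
      hcR (hK _ hKu)).trans (one_le_rpow (by nlinarith) hc)
end
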